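/- arXiv:2309.12187 — 2 statements merged into one kernel-verified Lean document; each statement's English description precedes it below -/
import Mathlib

section
/- If ν is a positive Borel measure on ℂ supported on a compact set S satisfying ν(B(z,r)) ≤ C·r^((p+λ−2)/p) for all balls, with 1 ≤ p < 2 and 2−p < λ ≤ 2+p, then the Cauchy transform g(z) = ∫ (ζ−z)^{-1} dν(ζ) satisfies: for every ball B of radius r centered at w, ∫_{B(w,r)} |∫_{B(w,2r)} (ζ−z)^{-1} dν(ζ)|^p dA(z) ≤ C'·r^λ for a constant C' depending only on C, p, λ. -/
open MeasureTheory Metric Complex ENNReal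

lemma ballA (p : ℝ) (hp0 : 0 < p) (hp2 : p < 2) :
    ∃ c : ℝ, 0 < c ∧ ∀ R : ℝ, 0 < R →
      (∫⁻ u in closedBall (0:ℂ) R, ((‖u‖₊ : ℝ≥0∞))⁻¹ ^ p) ≤
        ENNReal.ofReal (c * R ^ (2 - p)) := by
  have h2 : (0:ℝ) < 2 := two_pos
  have hq1 : (2:ℝ) ^ (p - 2) < 1 :=
    Real.rpow_lt_one_of_one_lt_of_neg one_lt_two (by linarith)
  have hq0 : (0:ℝ) < 2 ^ (p - 2) := Real.rpow_pos_of_pos h2 _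
  have hp2' : (0:ℝ) < 2 ^ p := Real.rpow_pos_of_pos h2 _
  refine ⟨Real.pi * 2 ^ p / (1 - 2 ^ (p - 2)),
    div_pos (mul_pos Real.pi_pos hp2') (by linarith), fun R hR => ?_⟩
  set f : ℂ → ℝ≥0∞ := fun u => ((‖u‖₊ : ℝ≥0∞))⁻¹ ^ p with hf
  set A : ℕ → Set ℂ := fun n =>
    closedBall (0:ℂ) (R * 2⁻¹ ^ n) \ closedBall (0:ℂ) (R * 2⁻¹ ^ (n + 1)) with hA
  have hcover : closedBall (0:ℂ) R ⊆ {0} ∪ ⋃ n, A n := by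
    intro u hu
    rcases eq_or_ne u 0 with h0 | h0
    · exact Or.inl h0
    · have hnorm : 0 < ‖u‖ := norm_pos_iff.mpr h0
      have huR : ‖u‖ ≤ R := by simpa [Complex.dist_eq] using hu
      have hex : ∃ n : ℕ, R * 2⁻¹ ^ (n + 1) < ‖u‖ := by
        obtain ⟨n, hn⟩ := exists_pow_lt_of_lt_one (div_pos hnorm hR) (by norm_num : (2:ℝ)⁻¹ < 1)
        have h1 : 2⁻¹ ^ n * R < ‖u‖ := (lt_div_iff₀ hR).mp hn
        have hpn : (0:ℝ) ≤ 2⁻¹ ^ n := by positivity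
        exact ⟨n, by rw [pow_succ]; nlinarith⟩
      refine Or.inr (Set.mem_iUnion.mpr ⟨Nat.find hex, ?_, ?_⟩)
      · have hub : ‖u‖ ≤ R * 2⁻¹ ^ (Nat.find hex) := by
          cases h : Nat.find hex with
          | zero => simpa using huR
          | succ k =>
            have := Nat.find_min hex (show k < Nat.find hex by omega)
            push_neg at this
            simpa [h] using this
        simpa [Complex.dist_eq] using hub
      · have := Nat.find_spec hex
        simp only [mem_closedBall, Complex.dist_eq, not_le]
        simpa using this
  have key : ∀ n : ℕ, (R * 2⁻¹ ^ (n+1)) ^ (-p) * ((R * 2⁻¹ ^ n) ^ 2 * Real.pi) =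
      (Real.pi * 2 ^ p * R ^ (2 - p)) * ((2:ℝ) ^ (p - 2)) ^ n := by
    intro n
    induction n with
    | zero =>
      simp only [zero_add, pow_one, pow_zero, mul_one]
      rw [Real.mul_rpow hR.le (by norm_num), Real.inv_rpow h2.le, ← Real.rpow_neg h2.le, neg_neg]
      have hR2 : R ^ ((2:ℝ) - p) = R ^ (2:ℕ) * R ^ (-p) := by
        rw [show ((2:ℝ) - p) = ((2:ℕ):ℝ) + (-p) by push_cast; ring, Real.rpow_add hR,
          Real.rpow_natCast]
      rw [hR2]; ring
    | succ k ih =>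
      have hmul : (R * 2⁻¹ ^ (k+1+1)) ^ (-p) = (R * 2⁻¹ ^ (k+1)) ^ (-p) * 2 ^ p := by
        rw [pow_succ, ← mul_assoc, Real.mul_rpow (by positivity) (by norm_num),
          Real.inv_rpow h2.le, ← Real.rpow_neg h2.le, neg_neg]
      have hsq : (R * 2⁻¹ ^ (k+1)) ^ 2 = (R * 2⁻¹ ^ k) ^ 2 * 4⁻¹ := by
        rw [pow_succ]; ring
      have h4 : (2:ℝ) ^ (p-2) = 2 ^ p * 4⁻¹ := by
        rw [Real.rpow_sub h2, show ((2:ℝ)) ^ (2:ℝ) = 4 from by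
          rw [show (2:ℝ) = ((2:ℕ):ℝ) by norm_num, Real.rpow_natCast]; norm_num]
        ring
      rw [hmul, hsq,
        show ((2:ℝ) ^ (p-2)) ^ (k+1) = ((2:ℝ) ^ (p-2)) ^ k * (2 ^ p * 4⁻¹) by
          rw [pow_succ, h4]]
      linear_combination (2 ^ p * 4⁻¹) * ih
  have hterm : ∀ n : ℕ, (∫⁻ u in A n, f u) ≤
      ENNReal.ofReal (Real.pi * 2 ^ p * R ^ (2 - p)) * ENNReal.ofReal (2 ^ (p - 2)) ^ n := by
    intro n
    have hrad : (0:ℝ) < R * 2⁻¹ ^ (n+1) := by positivity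
    have hstep1 : (∫⁻ u in A n, f u) ≤
        ENNReal.ofReal ((R * 2⁻¹ ^ (n+1)) ^ (-p)) * volume (A n) := by
      rw [← setLIntegral_const]
      refine setLIntegral_mono' (measurableSet_closedBall.diff measurableSet_closedBall) ?_
      intro u hu
      have hlb : R * 2⁻¹ ^ (n+1) < ‖u‖ := by
        have := hu.2
        simpa [hA, Complex.dist_eq] using this
      have hupos : (0:ℝ) < ‖u‖ := lt_trans hrad hlb
      have hfu : f u = ENNReal.ofReal (‖u‖ ^ (-p)) := by
        simp only [hf]
        rw [← (show ∀ x : ℂ, ENNReal.ofReal ‖x‖ = (‖x‖₊ : ℝ≥0∞) from ofReal_norm), ENNReal.inv_rpow, ← ENNReal.rpow_neg,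
          ENNReal.ofReal_rpow_of_pos hupos]
      rw [hfu]
      exact ENNReal.ofReal_le_ofReal
        (Real.rpow_le_rpow_of_nonpos hrad hlb.le (by linarith))
    have hvol : volume (A n) ≤ ENNReal.ofReal ((R * 2⁻¹ ^ n) ^ 2 * Real.pi) := by
      calc volume (A n) ≤ volume (closedBall (0:ℂ) (R * 2⁻¹ ^ n)) :=
            measure_mono Set.diff_subset
        _ = ENNReal.ofReal (R * 2⁻¹ ^ n) ^ 2 * NNReal.pi := Complex.volume_closedBall _ _
        _ = ENNReal.ofReal ((R * 2⁻¹ ^ n) ^ 2 * Real.pi) := by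
            symm
            rw [ENNReal.ofReal_mul (by positivity), ENNReal.ofReal_pow (by positivity),
              ← NNReal.coe_real_pi, ENNReal.ofReal_coe_nnreal]
    calc (∫⁻ u in A n, f u)
        ≤ ENNReal.ofReal ((R * 2⁻¹ ^ (n+1)) ^ (-p)) *
            ENNReal.ofReal ((R * 2⁻¹ ^ n) ^ 2 * Real.pi) :=
          le_trans hstep1 (mul_le_mul_right hvol _)
      _ = ENNReal.ofReal ((R * 2⁻¹ ^ (n+1)) ^ (-p) * ((R * 2⁻¹ ^ n) ^ 2 * Real.pi)) :=
          (ENNReal.ofReal_mul (by positivity)).symm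
      _ = ENNReal.ofReal (Real.pi * 2 ^ p * R ^ (2 - p)) * ENNReal.ofReal (2 ^ (p - 2)) ^ n := by
          rw [← ENNReal.ofReal_pow hq0.le, ← ENNReal.ofReal_mul (by positivity), key n]
  calc (∫⁻ u in closedBall (0:ℂ) R, f u)
      ≤ ∫⁻ u in ({0} ∪ ⋃ n, A n : Set ℂ), f u := lintegral_mono_set hcover
    _ ≤ (∫⁻ u in ({0} : Set ℂ), f u) + ∫⁻ u in (⋃ n, A n), f u := lintegral_union_le _ _ _
    _ = ∫⁻ u in (⋃ n, A n), f u := by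
        rw [Measure.restrict_singleton, measure_singleton, zero_smul,
          lintegral_zero_measure, zero_add]
    _ ≤ ∑' n, ∫⁻ u in A n, f u := lintegral_iUnion_le _ _
    _ ≤ ∑' n, ENNReal.ofReal (Real.pi * 2 ^ p * R ^ (2 - p)) *
          ENNReal.ofReal (2 ^ (p - 2)) ^ n := ENNReal.tsum_le_tsum hterm
    _ = ENNReal.ofReal (Real.pi * 2 ^ p * R ^ (2 - p)) *
          (1 - ENNReal.ofReal (2 ^ (p - 2)))⁻¹ := by
        rw [ENNReal.tsum_mul_left, ENNReal.tsum_geometric]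
    _ = ENNReal.ofReal (Real.pi * 2 ^ p / (1 - 2 ^ (p - 2)) * R ^ (2 - p)) := by
        rw [← ENNReal.ofReal_one, ← ENNReal.ofReal_sub 1 hq0.le,
          ← ENNReal.ofReal_inv_of_pos (by linarith), ← ENNReal.ofReal_mul (by positivity)]
        congr 1
        field_simp

/-- The local part of the Cauchy transform of a Frostman measure
satisfies the Campanato-type integral estimate. -/
theorem local_part_campanato_estimate
    (p lam C : ℝ) (hp1 : 1 ≤ p) (hp2 : p < 2)
    (hlam1 : 2 - p < lam) (hlam2 : lam ≤ 2 + p) (hC : 0 < C) :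
    ∃ C' : ℝ, 0 < C' ∧
      ∀ (ν : Measure ℂ) (S : Set ℂ), IsCompact S → ν Sᶜ = 0 →
        (∀ (z : ℂ) (r : ℝ), 0 < r →
          ν (closedBall z r) ≤ ENNReal.ofReal (C * r ^ ((p + lam - 2) / p))) →
        ∀ (w : ℂ) (r : ℝ), 0 < r →
          (∫ z in closedBall w r,
              ‖∫ ζ in closedBall w (2 * r), (ζ - z)⁻¹ ∂ν‖ ^ p) ≤ C' * r ^ lam := by
  have hp0 : (0:ℝ) < p := lt_of_lt_of_le one_pos hp1
  obtain ⟨c, hc, hcball⟩ := ballA p hp0 hp2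
  set α : ℝ := (p + lam - 2) / p with hαdef
  have hα : 0 < α := div_pos (by linarith) hp0
  refine ⟨c * 3 ^ (2 - p) * C ^ p * 2 ^ (p + lam - 2), by positivity, ?_⟩
  intro ν S _hS _hsupp hFrost w r hr
  set B2 : Set ℂ := closedBall w (2 * r) with hB2
  set Br : Set ℂ := closedBall w r with hBr
  set M : ℝ≥0∞ := ENNReal.ofReal (C * (2 * r) ^ α) with hMdef
  have hM : ν B2 ≤ M := hFrost w (2 * r) (by linarith)
  haveI hfin : IsFiniteMeasure (ν.restrict B2) :=
    ⟨by rw [Measure.restrict_apply_univ]; exact lt_of_le_of_lt hM ENNReal.ofReal_lt_top⟩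
  have hmeas2 : Measurable fun q : ℂ × ℂ => (q.2 - q.1)⁻¹ :=
    (measurable_snd.sub measurable_fst).inv
  set g : ℂ → ℂ := fun z => ∫ ζ in B2, (ζ - z)⁻¹ ∂ν with hg
  have hg_sm : StronglyMeasurable g :=
    hmeas2.stronglyMeasurable.integral_prod_right' (ν := ν.restrict B2)
  set F : ℂ → ℂ → ℝ≥0∞ := fun z ζ => ((‖ζ - z‖₊ : ℝ≥0∞))⁻¹ with hF
  have hFmeas : Measurable (Function.uncurry fun z ζ => F z ζ ^ p) :=
    ENNReal.continuous_rpow_const.measurable.comp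
      ((measurable_snd.sub measurable_fst).enorm).inv
  -- pointwise bound
  have hpt : ∀ z : ℂ, ENNReal.ofReal (‖g z‖ ^ p) ≤ (∫⁻ ζ in B2, F z ζ ∂ν) ^ p := by
    intro z
    have h1 : (‖g z‖₊ : ℝ≥0∞) ≤ ∫⁻ ζ in B2, (‖(ζ - z)⁻¹‖₊ : ℝ≥0∞) ∂ν :=
      enorm_integral_le_lintegral_enorm _
    have h2 : (∫⁻ ζ in B2, (‖(ζ - z)⁻¹‖₊ : ℝ≥0∞) ∂ν) ≤ ∫⁻ ζ in B2, F z ζ ∂ν := by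
      refine lintegral_mono fun ζ => ?_
      rw [nnnorm_inv]
      exact ENNReal.coe_inv_le
    rw [← ENNReal.ofReal_rpow_of_nonneg (norm_nonneg _) hp0.le, (show ∀ x : ℂ, ENNReal.ofReal ‖x‖ = (‖x‖₊ : ℝ≥0∞) from ofReal_norm)]
    exact ENNReal.rpow_le_rpow (le_trans h1 h2) hp0.le
  -- Hölder pointwise
  have hhold : ∀ z : ℂ, (∫⁻ ζ in B2, F z ζ ∂ν) ^ p ≤
      (∫⁻ ζ in B2, F z ζ ^ p ∂ν) * (ν B2) ^ (p - 1) := by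
    intro z
    have hFz : AEMeasurable (F z) (ν.restrict B2) :=
      (((measurable_id.sub_const z).enorm).inv).aemeasurable
    rcases eq_or_lt_of_le hp1 with hp1' | hp1'
    · simp only [← hp1', ENNReal.rpow_one, sub_self, ENNReal.rpow_zero, mul_one]
      exact le_of_eq (by simp [ENNReal.rpow_one])
    · have hpq : p.HolderConjugate (p / (p - 1)) := Real.HolderConjugate.conjExponent hp1'
      have := ENNReal.lintegral_mul_le_Lp_mul_Lq (ν.restrict B2) hpq hFz aemeasurable_const
        (g := fun _ => (1:ℝ≥0∞))
      simp only [Pi.mul_apply, mul_one, ENNReal.one_rpow, lintegral_const,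
        Measure.restrict_apply_univ, one_mul] at this
      have h3 : (∫⁻ ζ in B2, F z ζ ∂ν) ^ p ≤
          (((∫⁻ ζ in B2, F z ζ ^ p ∂ν) ^ (1/p)) * (ν B2) ^ (1/(p/(p-1)))) ^ p :=
        ENNReal.rpow_le_rpow this hp0.le
      refine le_trans h3 (le_of_eq ?_)
      have e1 : 1/p * p = 1 := by field_simp
      have e2 : 1/(p/(p-1)) * p = p - 1 := by
        field_simp
      rw [ENNReal.mul_rpow_of_nonneg _ _ hp0.le, ← ENNReal.rpow_mul, ← ENNReal.rpow_mul,
        e1, e2, ENNReal.rpow_one]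
  -- inner spatial bound, for ζ ∈ B2
  have hinner : ∀ ζ ∈ B2, (∫⁻ z in Br, F z ζ ^ p) ≤ ENNReal.ofReal (c * (3*r) ^ (2 - p)) := by
    intro ζ hζ
    have hsub : Br ⊆ closedBall ζ (3 * r) := by
      intro z hz
      have h1 : dist z w ≤ r := by simpa [hBr] using hz
      have h2 : dist w ζ ≤ 2 * r := by
        rw [dist_comm]; simpa [hB2] using hζ
      have := dist_triangle z w ζ
      simp only [mem_closedBall]
      linarith
    have hmp := Measure.measurePreserving_sub_left (volume : Measure ℂ) ζ
    have hpre : (fun t : ℂ => ζ - t) ⁻¹' closedBall (0:ℂ) (3*r) = closedBall ζ (3*r) := by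
      ext t
      simp only [Set.mem_preimage, mem_closedBall, Complex.dist_eq, sub_zero]
      rw [show ζ - t = -(t - ζ) by ring, norm_neg]
    have hchg := hmp.setLIntegral_comp_preimage_emb (Homeomorph.subLeft ζ).measurableEmbedding
      (fun u => ((‖u‖₊ : ℝ≥0∞))⁻¹ ^ p) (closedBall (0:ℂ) (3*r))
    rw [hpre] at hchg
    calc (∫⁻ z in Br, F z ζ ^ p) ≤ ∫⁻ z in closedBall ζ (3*r), F z ζ ^ p :=
          lintegral_mono_set hsub
      _ = ∫⁻ u in closedBall (0:ℂ) (3*r), ((‖u‖₊ : ℝ≥0∞))⁻¹ ^ p := by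
          rw [← hchg]
      _ ≤ ENNReal.ofReal (c * (3*r) ^ (2 - p)) := hcball (3*r) (by linarith)
  -- main chain in ℝ≥0∞
  have hMne0 : M ≠ 0 := by
    rw [hMdef]
    simp only [ne_eq, ENNReal.ofReal_eq_zero, not_le]
    positivity
  have hMnetop : M ≠ ⊤ := ENNReal.ofReal_ne_top
  have hMM : M * M ^ (p - 1) = M ^ p := by
    nth_rewrite 1 [← ENNReal.rpow_one M]
    rw [← ENNReal.rpow_add 1 (p-1) hMne0 hMnetop]
    congr 1
    ring
  have hpow_ne_top : (ν B2) ^ (p - 1) ≠ ⊤ :=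
    ENNReal.rpow_ne_top_of_nonneg (by linarith) (ne_top_of_le_ne_top hMnetop hM)
  have hL : (∫⁻ z in Br, ENNReal.ofReal (‖g z‖ ^ p)) ≤
      ENNReal.ofReal (c * (3*r) ^ (2 - p)) * M ^ p := by
    calc (∫⁻ z in Br, ENNReal.ofReal (‖g z‖ ^ p))
        ≤ ∫⁻ z in Br, (∫⁻ ζ in B2, F z ζ ^ p ∂ν) * (ν B2) ^ (p - 1) :=
          lintegral_mono fun z => le_trans (hpt z) (hhold z)
      _ = (∫⁻ z in Br, ∫⁻ ζ in B2, F z ζ ^ p ∂ν) * (ν B2) ^ (p - 1) := by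
          rw [lintegral_mul_const' _ _ hpow_ne_top]
      _ = (∫⁻ ζ in B2, (∫⁻ z in Br, F z ζ ^ p) ∂ν) * (ν B2) ^ (p - 1) := by
          rw [lintegral_lintegral_swap (hFmeas.aemeasurable)]
      _ ≤ (∫⁻ ζ in B2, ENNReal.ofReal (c * (3*r) ^ (2 - p)) ∂ν) * (ν B2) ^ (p - 1) :=
          mul_le_mul' (setLIntegral_mono' measurableSet_closedBall hinner) le_rfl
      _ = ENNReal.ofReal (c * (3*r) ^ (2 - p)) * (ν B2) * (ν B2) ^ (p - 1) := by
          rw [setLIntegral_const, mul_comm (ENNReal.ofReal _)]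
      _ ≤ ENNReal.ofReal (c * (3*r) ^ (2 - p)) * M * M ^ (p - 1) :=
          mul_le_mul' (mul_le_mul' le_rfl hM) (ENNReal.rpow_le_rpow hM (by linarith))
      _ = ENNReal.ofReal (c * (3*r) ^ (2 - p)) * M ^ p := by
          rw [mul_assoc, hMM]
  -- convert to real
  have hnn : 0 ≤ᵐ[volume.restrict Br] fun z => ‖g z‖ ^ p :=
    Filter.Eventually.of_forall fun z => Real.rpow_nonneg (norm_nonneg _) _
  have haesm : AEStronglyMeasurable (fun z => ‖g z‖ ^ p) (volume.restrict Br) :=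
    ((Real.continuous_rpow_const hp0.le).measurable.comp
      hg_sm.measurable.norm).aestronglyMeasurable
  rw [show (∫ z in Br, ‖g z‖ ^ p) =
      (∫⁻ z in Br, ENNReal.ofReal (‖g z‖ ^ p)).toReal from
    integral_eq_lintegral_of_nonneg_ae hnn haesm]
  have hfinal : (∫⁻ z in Br, ENNReal.ofReal (‖g z‖ ^ p)).toReal ≤
      (ENNReal.ofReal (c * (3*r) ^ (2 - p)) * M ^ p).toReal := by
    apply ENNReal.toReal_mono
    · exact ENNReal.mul_ne_top ENNReal.ofReal_ne_top
        (ENNReal.rpow_ne_top_of_nonneg hp0.le hMnetop)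
    · exact hL
  refine le_trans hfinal ?_
  have hMp : M ^ p = ENNReal.ofReal ((C * (2*r) ^ α) ^ p) := by
    rw [hMdef, ENNReal.ofReal_rpow_of_pos (by positivity)]
  rw [hMp, ← ENNReal.ofReal_mul (by positivity), ENNReal.toReal_ofReal (by positivity)]
  have hexp : (C * (2*r) ^ α) ^ p = C ^ p * 2 ^ (p + lam - 2) * r ^ (p + lam - 2) := by
    rw [Real.mul_rpow hC.le (by positivity), ← Real.rpow_mul (by positivity),
      hαdef, div_mul_cancel₀ _ (ne_of_gt hp0), Real.mul_rpow (by norm_num) hr.le]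
    ring
  have h3r : (3*r : ℝ) ^ (2 - p) = 3 ^ (2-p) * r ^ (2-p) :=
    Real.mul_rpow (by norm_num) hr.le
  rw [hexp, h3r]
  have hrr : r ^ (2-p) * r ^ (p + lam - 2) = r ^ lam := by
    rw [← Real.rpow_add hr]
    ring_nf
  refine le_of_eq ?_
  rw [← hrr]
  ring
end

section
/- Let ν be a finite positive Borel measure supported on the annulus A_n = {2^{-(n+1)} ≤ |z| ≤ 2^{-n}} in ℂ, let t be a non-negative integer, and define f(z) = ∫ (ζ/|ζ|)^{t+1} (ζ−z)^{-1} dν(ζ). Then f is analytic on ℂ∖A_n, and its t-th derivative at 0 satisfies f^{(t)}(0) = t!·∫ |ζ|^{-(t+1)} dν(ζ); consequently f^{(t)}(0) ≥ t!·2^{n(t+1)}·ν(A_n). -/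
open MeasureTheory Metric Complex Nat

lemma aux_hasDerivAt (ν : Measure ℂ) [IsFiniteMeasure ν] {A : Set ℂ} (hAc : IsClosed A)
    (hsupp : ν Aᶜ = 0) (Φ : ℂ → ℂ) (hΦ : Measurable Φ) (hΦb : ∀ ζ, ‖Φ ζ‖ ≤ 1)
    (m : ℕ) {z₀ : ℂ} (hz₀ : z₀ ∉ A) :
    HasDerivAt (fun z => ∫ ζ, Φ ζ * ((ζ - z) ^ (m + 1))⁻¹ ∂ν)
      (∫ ζ, Φ ζ * (((m : ℂ) + 1) * ((ζ - z₀) ^ (m + 2))⁻¹) ∂ν) z₀ := by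
  have haeA : ∀ᵐ ζ ∂ν, ζ ∈ A := by
    rw [ae_iff]
    simpa [Set.compl_def] using hsupp
  obtain ⟨ε, hε, hball⟩ : ∃ ε > 0, ball z₀ ε ⊆ Aᶜ :=
    Metric.isOpen_iff.mp hAc.isOpen_compl z₀ hz₀
  -- distance estimate
  have hdist : ∀ ζ ∈ A, ∀ x ∈ ball z₀ (ε / 2), ε / 2 ≤ ‖ζ - x‖ := by
    intro ζ hζ x hx
    have h1 : ε ≤ dist ζ z₀ := by
      by_contra h
      exact (hball (mem_ball.2 (lt_of_not_ge h))) hζ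
    have h2 : dist x z₀ < ε / 2 := mem_ball.1 hx
    have : dist ζ z₀ ≤ dist ζ x + dist x z₀ := dist_triangle _ _ _
    have : ε / 2 ≤ dist ζ x := by linarith
    simpa [dist_eq_norm] using this
  have hmeas : ∀ x : ℂ, AEStronglyMeasurable (fun ζ => Φ ζ * ((ζ - x) ^ (m + 1))⁻¹) ν := by
    intro x
    exact (hΦ.mul (((measurable_id.sub_const x).pow_const (m + 1)).inv)).aestronglyMeasurable
  have key := hasDerivAt_integral_of_dominated_loc_of_deriv_le (μ := ν)
    (F := fun x ζ => Φ ζ * ((ζ - x) ^ (m + 1))⁻¹)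
    (F' := fun x ζ => Φ ζ * (((m : ℂ) + 1) * ((ζ - x) ^ (m + 2))⁻¹))
    (x₀ := z₀) (bound := fun _ => ((m : ℝ) + 1) * ((ε / 2) ^ (m + 2))⁻¹)
    (ball_mem_nhds z₀ (half_pos hε))
    (Filter.Eventually.of_forall fun x => hmeas x)
    ?hint ?hmeas' ?hbound (integrable_const _) ?hdiff
  · exact key.2
  case hint =>
    refine (integrable_const ((ε / 2 : ℝ) ^ (m + 1))⁻¹).mono' (hmeas z₀) ?_
    filter_upwards [haeA] with ζ hζ
    have h1 : ε / 2 ≤ ‖ζ - z₀‖ := hdist ζ hζ z₀ (mem_ball_self (half_pos hε))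
    have h2 : (0 : ℝ) < (ε / 2) ^ (m + 1) := pow_pos (half_pos hε) _
    calc ‖Φ ζ * ((ζ - z₀) ^ (m + 1))⁻¹‖ ≤ 1 * ‖((ζ - z₀) ^ (m + 1))⁻¹‖ := by
          rw [norm_mul]; exact mul_le_mul_of_nonneg_right (hΦb ζ) (norm_nonneg _)
      _ = (‖ζ - z₀‖ ^ (m + 1))⁻¹ := by rw [one_mul, norm_inv, norm_pow]
      _ ≤ ((ε / 2) ^ (m + 1))⁻¹ := by
          exact inv_anti₀ h2 (pow_le_pow_left₀ (le_of_lt (half_pos hε)) h1 _)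
  case hmeas' =>
    exact (hΦ.mul (measurable_const.mul
      (((measurable_id.sub_const z₀).pow_const (m + 2)).inv))).aestronglyMeasurable
  case hbound =>
    filter_upwards [haeA] with ζ hζ
    intro x hx
    have h1 : ε / 2 ≤ ‖ζ - x‖ := hdist ζ hζ x hx
    have h2 : (0 : ℝ) < (ε / 2) ^ (m + 2) := pow_pos (half_pos hε) _
    have hm1 : ‖((m : ℂ) + 1)‖ = (m : ℝ) + 1 := by
      rw [show ((m : ℂ) + 1) = ((m + 1 : ℕ) : ℂ) by push_cast; ring, Complex.norm_natCast]
      push_cast; ring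
    calc ‖Φ ζ * (((m : ℂ) + 1) * ((ζ - x) ^ (m + 2))⁻¹)‖
        ≤ 1 * ‖((m : ℂ) + 1) * ((ζ - x) ^ (m + 2))⁻¹‖ := by
          rw [norm_mul]; exact mul_le_mul_of_nonneg_right (hΦb ζ) (norm_nonneg _)
      _ = ((m : ℝ) + 1) * (‖ζ - x‖ ^ (m + 2))⁻¹ := by
          rw [one_mul, norm_mul, norm_inv, norm_pow, hm1]
      _ ≤ ((m : ℝ) + 1) * ((ε / 2) ^ (m + 2))⁻¹ := by
          refine mul_le_mul_of_nonneg_left ?_ (by positivity)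
          exact inv_anti₀ h2 (pow_le_pow_left₀ (le_of_lt (half_pos hε)) h1 _)
  case hdiff =>
    filter_upwards [haeA] with ζ hζ
    intro x hx
    have h1 : ε / 2 ≤ ‖ζ - x‖ := hdist ζ hζ x hx
    have hne : ζ - x ≠ 0 := by
      intro h
      rw [h, norm_zero] at h1
      linarith [half_pos hε]
    -- derivative of z ↦ ((ζ - z)^(m+1))⁻¹
    have hzpow : HasDerivAt (fun z : ℂ => (ζ - z) ^ (-(m + 1 : ℕ) : ℤ))
        ((-(m + 1 : ℕ) : ℤ) * (ζ - x) ^ ((-(m + 1 : ℕ) : ℤ) - 1) * (-1)) x := by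
      have hsub : HasDerivAt (fun z : ℂ => ζ - z) (-1) x := by
        simpa using (hasDerivAt_id x).const_sub ζ
      exact (hasDerivAt_zpow _ _ (Or.inl hne)).comp x hsub
    have heq : (fun z : ℂ => (ζ - z) ^ (-(m + 1 : ℕ) : ℤ)) = fun z => ((ζ - z) ^ (m + 1))⁻¹ := by
      funext z
      rw [zpow_neg, zpow_natCast]
    have hval : ((-(m + 1 : ℕ) : ℤ) : ℂ) * (ζ - x) ^ ((-(m + 1 : ℕ) : ℤ) - 1) * (-1)
        = ((m : ℂ) + 1) * ((ζ - x) ^ (m + 2))⁻¹ := by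
      have : ((-(m + 1 : ℕ) : ℤ) - 1) = (-(m + 2 : ℕ) : ℤ) := by push_cast; ring
      rw [this, zpow_neg, zpow_natCast]
      push_cast
      ring
    rw [heq, hval] at hzpow
    exact hzpow.const_mul (Φ ζ)

/-- the modulated Cauchy transform of a measure supported on the annulus
`A_n = {2^{-(n+1)} ≤ |z| ≤ 2^{-n}}` is analytic off `A_n`, its `t`-th derivative at `0`
equals `t!·∫ |ζ|^{-(t+1)} dν`, and is bounded below by `t!·2^{n(t+1)}·ν(A_n)`. -/
theorem modulated_cauchy_transform_derivative
    (n t : ℕ) (ν : Measure ℂ) [IsFiniteMeasure ν]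
    (A : Set ℂ) (hA : A = {z : ℂ | (1 / 2 : ℝ) ^ (n + 1) ≤ ‖z‖ ∧ ‖z‖ ≤ (1 / 2 : ℝ) ^ n})
    (hsupp : ν Aᶜ = 0)
    (f : ℂ → ℂ)
    (hf : f = fun z => ∫ ζ, (ζ / (‖ζ‖ : ℂ)) ^ (t + 1) * (ζ - z)⁻¹ ∂ν) :
    DifferentiableOn ℂ f Aᶜ ∧
    iteratedDeriv t f 0 = (t ! : ℂ) * Complex.ofReal (∫ ζ, (‖ζ‖ ^ (t + 1))⁻¹ ∂ν) ∧
    (t ! : ℝ) * 2 ^ (n * (t + 1)) * (ν A).toReal ≤ (iteratedDeriv t f 0).re := by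
  have hAc : IsClosed A := by
    rw [hA]
    exact (isClosed_le continuous_const continuous_norm).inter
      (isClosed_le continuous_norm continuous_const)
  have h0A : (0 : ℂ) ∉ A := by
    rw [hA]
    intro h
    have := h.1
    simp only [norm_zero] at this
    have : (0 : ℝ) < (1 / 2 : ℝ) ^ (n + 1) := by positivity
    linarith [h.1, norm_zero (E := ℂ)]
  have haeA : ∀ᵐ ζ ∂ν, ζ ∈ A := by
    rw [ae_iff]
    simpa [Set.compl_def] using hsupp
  set Φ : ℂ → ℂ := fun ζ => (ζ / (‖ζ‖ : ℂ)) ^ (t + 1) with hΦdef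
  have hΦ : Measurable Φ :=
    ((measurable_id.div (Complex.measurable_ofReal.comp measurable_norm)).pow_const (t + 1))
  have hΦb : ∀ ζ, ‖Φ ζ‖ ≤ 1 := by
    intro ζ
    rw [hΦdef]
    simp only [norm_pow]
    by_cases hζ : ζ = 0
    · simp [hζ]
    · have : ‖ζ / (‖ζ‖ : ℂ)‖ = 1 := by
        rw [norm_div, Complex.norm_real, Real.norm_eq_abs, _root_.abs_of_nonneg (norm_nonneg ζ),
          div_self (norm_ne_zero_iff.mpr hζ)]
      rw [this, one_pow]
  set F : ℕ → ℂ → ℂ := fun m z => ∫ ζ, Φ ζ * ((ζ - z) ^ (m + 1))⁻¹ ∂ν with hFdef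
  have hFd : ∀ m : ℕ, ∀ z₀ ∉ A, HasDerivAt (F m) (((m : ℂ) + 1) * F (m + 1) z₀) z₀ := by
    intro m z₀ hz₀
    have h := aux_hasDerivAt ν hAc hsupp Φ hΦ hΦb m hz₀
    have heq : ∫ ζ, Φ ζ * (((m : ℂ) + 1) * ((ζ - z₀) ^ (m + 2))⁻¹) ∂ν
        = ((m : ℂ) + 1) * F (m + 1) z₀ := by
      rw [hFdef]
      simp only
      rw [← integral_const_mul]
      congr 1
      funext ζ
      ring
    rw [heq] at h
    exact h
  have hfF : f = F 0 := by
    rw [hf]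
    funext z
    show _ = ∫ ζ, Φ ζ * ((ζ - z) ^ (0 + 1))⁻¹ ∂ν
    simp only [hΦdef, zero_add, pow_one]
  have hiter : ∀ k : ℕ, ∀ z ∉ A, iteratedDeriv k f z = (k ! : ℂ) * F k z := by
    intro k
    induction k with
    | zero => intro z hz; simp [hfF]
    | succ k ih =>
      intro z hz
      rw [iteratedDeriv_succ]
      have hev : iteratedDeriv k f =ᶠ[nhds z] fun w => (k ! : ℂ) * F k w :=
        Filter.eventuallyEq_of_mem (hAc.isOpen_compl.mem_nhds hz) fun w hw => ih w hw
      rw [hev.deriv_eq]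
      have := ((hFd k z hz).const_mul (k ! : ℂ)).deriv
      rw [this]
      rw [Nat.factorial_succ]
      push_cast
      ring
  have hdiff : DifferentiableOn ℂ f Aᶜ := by
    intro z hz
    exact (hfF ▸ (hFd 0 z hz).differentiableAt).differentiableWithinAt
  have hval : iteratedDeriv t f 0 = (t ! : ℂ) * Complex.ofReal (∫ ζ, (‖ζ‖ ^ (t + 1))⁻¹ ∂ν) := by
    rw [hiter t 0 h0A]
    congr 1
    have : F t 0 = ∫ ζ, ((((‖ζ‖ ^ (t + 1))⁻¹ : ℝ)) : ℂ) ∂ν := by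
      rw [hFdef]
      simp only
      refine integral_congr_ae ?_
      filter_upwards [haeA] with ζ hζ
      have hζ0 : ζ ≠ 0 := by
        intro h
        rw [h] at hζ
        exact h0A hζ
      have hn0 : (‖ζ‖ : ℂ) ≠ 0 := by
        simpa [Complex.ofReal_eq_zero] using norm_ne_zero_iff.mpr hζ0
      rw [hΦdef]
      simp only [sub_zero]
      rw [div_pow]
      push_cast
      field_simp
    rw [this]
    exact integral_ofReal
  refine ⟨hdiff, hval, ?_⟩
  rw [hval]
  have hre : ((t ! : ℂ) * Complex.ofReal (∫ ζ, (‖ζ‖ ^ (t + 1))⁻¹ ∂ν)).re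
      = (t ! : ℝ) * ∫ ζ, (‖ζ‖ ^ (t + 1))⁻¹ ∂ν := by
    rw [show (t ! : ℂ) = Complex.ofReal (t ! : ℝ) by push_cast; ring, ← Complex.ofReal_mul,
      Complex.ofReal_re]
  rw [hre]
  rw [mul_assoc]
  refine mul_le_mul_of_nonneg_left ?_ (Nat.cast_nonneg _)
  -- integral lower bound
  have hAmeas : MeasurableSet A := hAc.measurableSet
  have hg_int : Integrable (fun ζ => (‖ζ‖ ^ (t + 1))⁻¹) ν := by
    refine (integrable_const ((((1 / 2 : ℝ)) ^ (n + 1)) ^ (t + 1))⁻¹).mono'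
      ((measurable_norm.pow_const (t + 1)).inv.aestronglyMeasurable) ?_
    filter_upwards [haeA] with ζ hζ
    rw [hA] at hζ
    have h1 : (1 / 2 : ℝ) ^ (n + 1) ≤ ‖ζ‖ := hζ.1
    have hp : (0 : ℝ) < ((1 / 2 : ℝ) ^ (n + 1)) ^ (t + 1) := by positivity
    rw [Real.norm_eq_abs, _root_.abs_of_nonneg (by positivity)]
    exact inv_anti₀ hp (pow_le_pow_left₀ (by positivity) h1 _)
  have hind : ∫ ζ, A.indicator (fun _ => (2 : ℝ) ^ (n * (t + 1))) ζ ∂ν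
      = (2 : ℝ) ^ (n * (t + 1)) * (ν A).toReal := by
    rw [integral_indicator_const _ hAmeas]
    simp [mul_comm, measureReal_def]
  rw [← hind]
  refine integral_mono_ae ((integrable_const _).indicator hAmeas) hg_int ?_
  filter_upwards [haeA] with ζ hζ
  rw [Set.indicator_of_mem hζ]
  rw [hA] at hζ
  have hζ0 : ζ ≠ 0 := by
    intro h
    rw [h] at hζ
    exact h0A (hA ▸ hζ)
  have hpos : (0 : ℝ) < ‖ζ‖ ^ (t + 1) := pow_pos (norm_pos_iff.mpr hζ0) _
  have hle : ‖ζ‖ ^ (t + 1) ≤ (1 / 2 : ℝ) ^ (n * (t + 1)) := by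
    rw [pow_mul]
    exact pow_le_pow_left₀ (norm_nonneg ζ) hζ.2 _
  have h2 : (2 : ℝ) ^ (n * (t + 1)) = ((1 / 2 : ℝ) ^ (n * (t + 1)))⁻¹ := by
    rw [one_div, inv_pow, inv_inv]
  rw [h2]
  exact inv_anti₀ hpos hle
end
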